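/- arXiv:2602.01252 — 2 statements merged into one kernel-verified Lean document; each statement's English description precedes it below -/
import Mathlib

section
/- Let b ≥ 2 and k ≥ 1 be integers, let m ≥ 1 with gcd(m, b) = 1, and let r satisfy 0 ≤ r < m. Then for every integer s₀ ≥ 1 there exists a positive integer n with n ≡ r (mod m) such that s_b(n) = s_{b^2}(n) = ⋯ = s_{b^k}(n) ≥ s₀ and s_{b^ℓ}(n) divides n for every ℓ with 1 ≤ ℓ ≤ k. -/
/-!
Take `n = ∑_{i<S} b^(E i)`. When `ℓ ∣ E`, the base-`b^ℓ` expansion of `n` consists of `S` ones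
separated by zeros, so `s_{b^ℓ}(n) = S` for every `ℓ ≤ k` as soon as `k! ∣ E`. If moreover
`b^E ≡ 1 (mod m S)` then `n ≡ S (mod m S)`, so `S ∣ n` and `n ≡ S (mod m)`. It remains to pick
`S ≥ s₀` with `S ≡ r (mod m)` and `S` coprime to `b`, and to take `E = φ(m S) k!`.
-/

open Finset

namespace Nat

theorem digits_sum_base_pow_mul {B : ℕ} (hB : 1 < B) (j q : ℕ) :
    (digits B (B ^ j * q)).sum = (digits B q).sum := by
  rcases q.eq_zero_or_pos with rfl | hq
  · simp
  · simp [digits_base_pow_mul hB hq]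

theorem digits_sum_one_add_base_pow_mul {B c : ℕ} (hB : 1 < B) (hc : 0 < c) (q : ℕ) :
    (digits B (1 + B ^ c * q)).sum = 1 + (digits B q).sum := by
  have hsplit : 1 + B ^ c * q = 1 + B ^ (digits B 1).length * (B ^ (c - 1) * q) := by
    rw [digits_of_lt B 1 one_ne_zero hB, List.length_singleton, ← mul_assoc, ← pow_add,
      Nat.add_sub_cancel' hc]
  rw [hsplit, ← digits_append_digits (by omega), List.sum_append, digits_sum_base_pow_mul hB,
    digits_of_lt B 1 one_ne_zero hB, List.sum_singleton]

theorem digits_sum_geom_sum {B c : ℕ} (hB : 1 < B) (hc : 0 < c) (S : ℕ) :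
    (digits B (∑ i ∈ range S, (B ^ c) ^ i)).sum = S := by
  induction S with
  | zero => simp
  | succ S ih =>
    have hshift : ∑ i ∈ range (S + 1), (B ^ c) ^ i = 1 + B ^ c * ∑ i ∈ range S, (B ^ c) ^ i := by
      rw [sum_range_succ', mul_sum, add_comm]
      simp only [pow_succ', pow_zero]
    rw [hshift, digits_sum_one_add_base_pow_mul hB hc, ih, add_comm]

theorem digits_sum_geom_sum_of_dvd {b ℓ E : ℕ} (hb : 1 < b) (hℓ : 0 < ℓ) (hE : 0 < E)
    (hℓE : ℓ ∣ E) (S : ℕ) :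
    (digits (b ^ ℓ) (∑ i ∈ range S, (b ^ E) ^ i)).sum = S := by
  obtain ⟨c, rfl⟩ := hℓE
  rw [pow_mul]
  exact digits_sum_geom_sum (one_lt_pow hℓ.ne' hb) (pos_of_mul_pos_right hE hℓ.le) S

theorem geom_sum_modEq_of_modEq_one {x P : ℕ} (hx : x ≡ 1 [MOD P]) (S : ℕ) :
    ∑ i ∈ range S, x ^ i ≡ S [MOD P] := by
  rw [← ZMod.natCast_eq_natCast_iff] at hx ⊢
  push_cast
  simp [hx]

theorem exists_le_modEq_coprime {m b : ℕ} (hmb : Coprime m b) (hm : 0 < m) (hb : 0 < b)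
    (r s₀ : ℕ) : ∃ S, s₀ ≤ S ∧ S ≡ r [MOD m] ∧ Coprime S b := by
  obtain ⟨x, hxr, hxb⟩ := chineseRemainder hmb r 1
  have hxm : x + m * b * s₀ ≡ x [MOD m] := by simp [ModEq, mul_assoc]
  have hxb' : x + m * b * s₀ ≡ x [MOD b] := by simp [ModEq, mul_comm m b, mul_assoc]
  refine ⟨x + m * b * s₀, ?_, hxm.trans hxr, ((hxb'.trans hxb).gcd_eq).trans (gcd_one_left b)⟩
  nlinarith [Nat.mul_pos hm hb]

end Nat

theorem stmt_12_general (b k m r : ℕ) (hb : 2 ≤ b) (hm : 1 ≤ m)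
    (hgcd : Nat.gcd m b = 1) (s₀ : ℕ) :
    ∃ n : ℕ, 0 < n ∧ n ≡ r [MOD m] ∧
      (∀ ℓ : ℕ, 1 ≤ ℓ → ℓ ≤ k → (Nat.digits (b ^ ℓ) n).sum = (Nat.digits b n).sum) ∧
      s₀ ≤ (Nat.digits b n).sum ∧
      ∀ ℓ : ℕ, 1 ≤ ℓ → ℓ ≤ k → (Nat.digits (b ^ ℓ) n).sum ∣ n := by
  obtain ⟨S, hs₀S, hSr, hSb⟩ := Nat.exists_le_modEq_coprime hgcd hm (by omega) r s₀
  have hSpos : 0 < S := Nat.pos_of_ne_zero fun h => by simp [h] at hSb; omega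
  have hbmS : Nat.Coprime b (m * S) := Nat.Coprime.mul_right (Nat.Coprime.symm hgcd) hSb.symm
  set E := Nat.totient (m * S) * k.factorial
  have hEpos : 0 < E := Nat.mul_pos (Nat.totient_pos.2 (by positivity)) k.factorial_pos
  have hbE : b ^ E ≡ 1 [MOD m * S] := by
    simpa [E, pow_mul] using (Nat.ModEq.pow_totient hbmS).pow k.factorial
  set n := ∑ i ∈ Finset.range S, (b ^ E) ^ i
  have hnS : n ≡ S [MOD m * S] := Nat.geom_sum_modEq_of_modEq_one hbE S
  have hdigits : (Nat.digits b n).sum = S := Nat.digits_sum_geom_sum (by omega) hEpos S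
  have hdigits_pow (ℓ : ℕ) (h1 : 1 ≤ ℓ) (h2 : ℓ ≤ k) : (Nat.digits (b ^ ℓ) n).sum = S :=
    Nat.digits_sum_geom_sum_of_dvd (by omega) h1 hEpos
      (dvd_mul_of_dvd_right (Nat.dvd_factorial h1 h2) _) S
  have hnpos : 0 < n := Nat.pos_of_ne_zero fun h => by simp [h] at hdigits; omega
  refine ⟨n, hnpos, (hnS.of_mul_right S).trans hSr, fun ℓ h1 h2 => ?_, hdigits ▸ hs₀S,
    fun ℓ h1 h2 => ?_⟩
  · rw [hdigits_pow ℓ h1 h2, hdigits]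
  · rw [hdigits_pow ℓ h1 h2]
    exact (hnS.dvd_iff (dvd_mul_left S m)).2 dvd_rfl

/-- For every `s₀ ≥ 1` there exists `n` in the progression with
`s_b(n) = s_{b^2}(n) = ⋯ = s_{b^k}(n) ≥ s₀` and `n` simultaneously `b^ℓ`-Niven
for all `ℓ = 1, ..., k`. -/
theorem stmt_12 (b k m r : ℕ) (hb : 2 ≤ b) (hk : 1 ≤ k) (hm : 1 ≤ m)
    (hgcd : Nat.gcd m b = 1) (hr : r < m) (s₀ : ℕ) (hs₀ : 1 ≤ s₀) :
    ∃ n : ℕ, 0 < n ∧ n ≡ r [MOD m] ∧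
      (∀ ℓ : ℕ, 1 ≤ ℓ → ℓ ≤ k → (Nat.digits (b ^ ℓ) n).sum = (Nat.digits b n).sum) ∧
      s₀ ≤ (Nat.digits b n).sum ∧
      ∀ ℓ : ℕ, 1 ≤ ℓ → ℓ ≤ k → (Nat.digits (b ^ ℓ) n).sum ∣ n :=
  stmt_12_general b k m r hb hm hgcd s₀
end

section
/- Let b ≥ 2 and k ≥ 1 be integers with B = b^k, let m ≥ 1 with gcd(m, b) = 1, and let s ≥ 1 satisfy gcd(s, b) = 1. Set ω = ord_{ms}(B) and n = Σ_{j=0}^{s−1} B^{jω}. If ℓ is a positive divisor of k, then s_{b^ℓ}(n) = s, and consequently n is b^ℓ-Niven. -/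
/-!
Since `ℓ ∣ k`, the terms `(b^k)^(jω)` are the powers `(b^ℓ)^(j·kω/ℓ)` with pairwise distinct
exponents, so `n` has exactly `s` digits equal to `1` in base `b^ℓ` and all others `0`; this needs
`ω ≥ 1`, which holds because `b^k` is a unit modulo `ms`. As `(b^k)^ω ≡ 1 (mod ms)`, each of the
`s` terms of `n` is `1` modulo `s`, so `s ∣ n`.
-/

namespace Nat

theorem digits_sum_base_pow_mul_s14 {c : ℕ} (hc : 1 < c) (e n : ℕ) :
    (digits c (c ^ e * n)).sum = (digits c n).sum := by
  rcases n.eq_zero_or_pos with rfl | hn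
  · simp
  · simp [digits_base_pow_mul hc hn]

theorem digits_sum_sum_range_pow_mul {c d : ℕ} (hc : 1 < c) (hd : 0 < d) (s : ℕ) :
    (digits c (∑ j ∈ Finset.range s, c ^ (j * d))).sum = s := by
  obtain ⟨e, rfl⟩ : ∃ e, d = e + 1 := ⟨d - 1, by omega⟩
  induction s with
  | zero => simp
  | succ s ih =>
    have hsplit : ∑ j ∈ Finset.range (s + 1), c ^ (j * (e + 1))
        = 1 + c * (c ^ e * ∑ j ∈ Finset.range s, c ^ (j * (e + 1))) := by
      rw [Finset.sum_range_succ', Finset.mul_sum, Finset.mul_sum]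
      simp only [add_mul, one_mul, zero_mul, pow_zero, pow_add, pow_one]
      rw [add_comm]
      congr 1
      exact Finset.sum_congr rfl fun j _ => by ring
    rw [hsplit, digits_add c hc 1 _ hc (Or.inl one_ne_zero), List.sum_cons,
      digits_sum_base_pow_mul_s14 hc, ih, add_comm]

theorem dvd_sum_range_pow_mul_of_pow_eq_one {a s ω : ℕ} (h : (a : ZMod s) ^ ω = 1) :
    s ∣ ∑ j ∈ Finset.range s, a ^ (j * ω) := by
  rw [← ZMod.natCast_eq_zero_iff]
  push_cast
  simp [mul_comm _ ω, pow_mul, h]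

end Nat

theorem ZMod.orderOf_natCast_pos {a N : ℕ} [NeZero N] (h : a.Coprime N) :
    0 < orderOf (a : ZMod N) :=
  ((ZMod.isUnit_iff_coprime a N).2 h).isOfFinOrder.orderOf_pos

theorem stmt_14_general (b k m s ℓ : ℕ) (hb : 2 ≤ b) (hk : 1 ≤ k) (hm : 1 ≤ m)
    (hgcd : Nat.gcd m b = 1) (hsb : Nat.gcd s b = 1)
    (hℓk : ℓ ∣ k)
    (ω : ℕ) (hω : ω = orderOf ((b ^ k : ℕ) : ZMod (m * s)))
    (n : ℕ) (hn : n = ∑ j ∈ Finset.range s, (b ^ k) ^ (j * ω)) :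
    (Nat.digits (b ^ ℓ) n).sum = s ∧ (Nat.digits (b ^ ℓ) n).sum ∣ n := by
  have hdigits : (Nat.digits (b ^ ℓ) n).sum = s := by
    rcases s.eq_zero_or_pos with rfl | hs
    · simp [hn]
    obtain ⟨q, rfl⟩ := hℓk
    obtain ⟨hℓ, hq⟩ : ℓ ≠ 0 ∧ q ≠ 0 := Nat.mul_ne_zero_iff.1 (by omega)
    have : NeZero (m * s) := ⟨by positivity⟩
    have hω_pos : 0 < ω := hω ▸ ZMod.orderOf_natCast_pos
      ((Nat.Coprime.mul_right (Nat.Coprime.symm hgcd) (Nat.Coprime.symm hsb)).pow_left _)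
    have hterm : ∀ j, (b ^ (ℓ * q)) ^ (j * ω) = (b ^ ℓ) ^ (j * (q * ω)) := fun j => by
      rw [← pow_mul, ← pow_mul]; ring_nf
    simp only [hn, hterm]
    exact Nat.digits_sum_sum_range_pow_mul (Nat.one_lt_pow hℓ hb) (by positivity) s
  have hpow : ((b ^ k : ℕ) : ZMod s) ^ ω = 1 := by
    have h := congrArg (ZMod.castHom (dvd_mul_left s m) (ZMod s))
      (pow_orderOf_eq_one ((b ^ k : ℕ) : ZMod (m * s)))
    rwa [map_pow, map_natCast, map_one, ← hω] at h
  exact ⟨hdigits, hdigits ▸ hn ▸ Nat.dvd_sum_range_pow_mul_of_pow_eq_one hpow⟩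

/-- With `ω = ord_{ms}(b^k)` and `n = Σ_{j<s} (b^k)^{jω}`, if `ℓ` is a positive
divisor of `k` then `s_{b^ℓ}(n) = s` and `n` is `b^ℓ`-Niven. -/
theorem stmt_14 (b k m s ℓ : ℕ) (hb : 2 ≤ b) (hk : 1 ≤ k) (hm : 1 ≤ m)
    (hgcd : Nat.gcd m b = 1) (hs : 1 ≤ s) (hsb : Nat.gcd s b = 1)
    (hℓ : 1 ≤ ℓ) (hℓk : ℓ ∣ k)
    (ω : ℕ) (hω : ω = orderOf ((b ^ k : ℕ) : ZMod (m * s)))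
    (n : ℕ) (hn : n = ∑ j ∈ Finset.range s, (b ^ k) ^ (j * ω)) :
    (Nat.digits (b ^ ℓ) n).sum = s ∧ (Nat.digits (b ^ ℓ) n).sum ∣ n :=
  stmt_14_general b k m s ℓ hb hk hm hgcd hsb hℓk ω hω n hn
end
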